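/- Let X be a real n×p matrix and let a, k be integers with 1 ≤ a ≤ n, a ≤ k ≤ p. Let s° be an optimal solution of Problem (2) and let η ≥ η(s°). If s^A is an optimal solution of Problem (7) with parameter η, then π(s°) − π(s^A) ≤ η; that is, the difference between the optimal value of Problem (2) and the value of the objective of Problem (2) evaluated at s^A is bounded by η. -/

import Mathlib

/-!
For binary `s`, the squared norm `μ(s) = ‖X diag(s)‖²` splits by Pythagoras as
`π(s) + η(s)`: for every `U ∈ St(n,a)`, `U Uᵀ` is an orthogonal projection. Since `s°` is
feasible for Problem (7), `π(s°) ≤ μ(s°) ≤ μ(sᴬ) = π(sᴬ) + η(sᴬ) ≤ π(sᴬ) + η`.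
-/

open Matrix BigOperators

noncomputable section

/-- Squared Frobenius norm of a real matrix. -/
def frobSq {n m : ℕ} (M : Matrix (Fin n) (Fin m) ℝ) : ℝ := ∑ i, ∑ j, (M i j) ^ 2

/-- A vector is binary if each entry is 0 or 1. -/
def IsBinary {p : ℕ} (s : Fin p → ℝ) : Prop := ∀ i, s i = 0 ∨ s i = 1

/-- Stiefel set: matrices with orthonormal columns. -/
def Stiefel (n a : ℕ) : Set (Matrix (Fin n) (Fin a) ℝ) := {U | Uᵀ * U = 1}

/-- Squared Euclidean norm of column `i` of `X`. -/
def colNormSq {n p : ℕ} (X : Matrix (Fin n) (Fin p) ℝ) (i : Fin p) : ℝ :=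
  ∑ r, (X r i) ^ 2

/-- μ(s) = Σ_i s_i ‖X_i‖². -/
def muF {n p : ℕ} (X : Matrix (Fin n) (Fin p) ℝ) (s : Fin p → ℝ) : ℝ :=
  ∑ i, s i * colNormSq X i

/-- η(s) = inf over Stiefel matrices U of ‖X diag(s) − U Uᵀ X diag(s)‖_F². -/
def etaF {n p : ℕ} (X : Matrix (Fin n) (Fin p) ℝ) (a : ℕ) (s : Fin p → ℝ) : ℝ :=
  sInf ((fun U : Matrix (Fin n) (Fin a) ℝ =>
    frobSq (X * diagonal s - U * Uᵀ * (X * diagonal s))) '' Stiefel n a)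

/-- π(s) = sup over Stiefel matrices U of ‖U Uᵀ X diag(s)‖_F². -/
def piF {n p : ℕ} (X : Matrix (Fin n) (Fin p) ℝ) (a : ℕ) (s : Fin p → ℝ) : ℝ :=
  sSup ((fun U : Matrix (Fin n) (Fin a) ℝ =>
    frobSq (U * Uᵀ * (X * diagonal s))) '' Stiefel n a)

/-- Feasibility for Problem (2): binary with at most k ones. -/
def Feas {p : ℕ} (k : ℕ) (s : Fin p → ℝ) : Prop :=
  IsBinary s ∧ ∑ i, s i ≤ (k : ℝ)

/-- Optimality for Problem (2): feasible and maximizing π. -/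
def Opt2 {n p : ℕ} (X : Matrix (Fin n) (Fin p) ℝ) (a k : ℕ) (s : Fin p → ℝ) : Prop :=
  Feas k s ∧ ∀ s' : Fin p → ℝ, Feas k s' → piF X a s' ≤ piF X a s

/-- Feasibility for Problem (7) with parameter η. -/
def Feas7 {n p : ℕ} (X : Matrix (Fin n) (Fin p) ℝ) (a k : ℕ) (η : ℝ) (s : Fin p → ℝ) : Prop :=
  Feas k s ∧ etaF X a s ≤ η

/-- Optimality for Problem (7): feasible and maximizing μ. -/
def Opt7 {n p : ℕ} (X : Matrix (Fin n) (Fin p) ℝ) (a k : ℕ) (η : ℝ) (s : Fin p → ℝ) : Prop :=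
  Feas7 X a k η s ∧ ∀ s' : Fin p → ℝ, Feas7 X a k η s' → muF X s' ≤ muF X s

lemma frobSq_nonneg {n m : ℕ} (M : Matrix (Fin n) (Fin m) ℝ) : 0 ≤ frobSq M :=
  Finset.sum_nonneg fun _ _ => Finset.sum_nonneg fun _ _ => sq_nonneg _

lemma frobSq_eq_trace {n m : ℕ} (M : Matrix (Fin n) (Fin m) ℝ) :
    frobSq M = (Mᵀ * M).trace := by
  simp only [frobSq, trace, diag, mul_apply, transpose_apply, sq]
  exact Finset.sum_comm

lemma frobSq_mul_diagonal_of_isBinary {n p : ℕ} (X : Matrix (Fin n) (Fin p) ℝ)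
    {s : Fin p → ℝ} (hs : IsBinary s) : frobSq (X * diagonal s) = muF X s := by
  simp only [frobSq, muF, colNormSq, mul_diagonal, Finset.mul_sum]
  rw [Finset.sum_comm]
  refine Finset.sum_congr rfl fun j _ => Finset.sum_congr rfl fun i _ => ?_
  rcases hs j with h | h <;> rw [h] <;> ring

lemma frobSq_sub_proj_add_frobSq_proj {n m a : ℕ} (M : Matrix (Fin n) (Fin m) ℝ)
    {U : Matrix (Fin n) (Fin a) ℝ} (hU : U ∈ Stiefel n a) :
    frobSq (M - U * Uᵀ * M) + frobSq (U * Uᵀ * M) = frobSq M := by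
  have hP : (U * Uᵀ)ᵀ = U * Uᵀ := by rw [transpose_mul, transpose_transpose]
  have hUU (N : Matrix (Fin m) (Fin n) ℝ) : N * U * Uᵀ * U = N * U := by
    rw [Matrix.mul_assoc _ Uᵀ, show Uᵀ * U = 1 from hU, Matrix.mul_one]
  simp only [frobSq_eq_trace, transpose_sub, transpose_mul _ M, hP, Matrix.sub_mul,
    Matrix.mul_sub, ← Matrix.mul_assoc, hUU, trace_sub]
  ring

lemma stiefel_nonempty {n a : ℕ} (han : a ≤ n) : (Stiefel n a).Nonempty := by
  refine ⟨of fun i j => if i = Fin.castLE han j then (1 : ℝ) else 0, ?_⟩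
  ext j j'
  simp only [mul_apply, transpose_apply, of_apply, one_apply, ite_mul, one_mul, zero_mul,
    Finset.sum_ite_eq', Finset.mem_univ, if_true, (Fin.castLE_injective han).eq_iff]

lemma etaF_nonneg {n p : ℕ} (X : Matrix (Fin n) (Fin p) ℝ) (a : ℕ) (s : Fin p → ℝ) :
    0 ≤ etaF X a s :=
  Real.sInf_nonneg <| by rintro _ ⟨U, -, rfl⟩; exact frobSq_nonneg _

lemma piF_add_etaF {n p : ℕ} (X : Matrix (Fin n) (Fin p) ℝ) {a : ℕ} (han : a ≤ n)
    (s : Fin p → ℝ) : piF X a s + etaF X a s = frobSq (X * diagonal s) := by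
  set M := X * diagonal s
  set residuals := (fun U : Matrix (Fin n) (Fin a) ℝ => frobSq (M - U * Uᵀ * M)) '' Stiefel n a
  have hproj : (fun U : Matrix (Fin n) (Fin a) ℝ => frobSq (U * Uᵀ * M)) '' Stiefel n a =
      (frobSq M - ·) '' residuals := by
    rw [Set.image_image]
    refine Set.image_congr fun U hU => ?_
    linarith [frobSq_sub_proj_add_frobSq_proj M hU]
  have hbdd : BddBelow residuals := ⟨0, by rintro _ ⟨U, -, rfl⟩; exact frobSq_nonneg _⟩
  have := Antitone.map_csInf_of_continuousAt (f := (frobSq M - ·))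
    (continuous_sub_left _).continuousAt (fun _ _ h => sub_le_sub_left h _)
    ((stiefel_nonempty han).image _) hbdd
  rw [piF, hproj, ← this, etaF]
  ring

theorem stmt_1_general {n p : ℕ} (X : Matrix (Fin n) (Fin p) ℝ) (a k : ℕ)
    (han : a ≤ n)
    (so : Fin p → ℝ) (hso : Opt2 X a k so)
    (η : ℝ) (hη : etaF X a so ≤ η)
    (sA : Fin p → ℝ) (hsA : Opt7 X a k η sA) :
    piF X a so - piF X a sA ≤ η := by
  obtain ⟨hso_feas, -⟩ := hso
  obtain ⟨⟨hsA_feas, hsA_eta⟩, hsA_max⟩ := hsA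
  have split (s : Fin p → ℝ) (hs : IsBinary s) : piF X a s + etaF X a s = muF X s :=
    (piF_add_etaF X han s).trans (frobSq_mul_diagonal_of_isBinary X hs)
  have hmu : muF X so ≤ muF X sA := hsA_max so ⟨hso_feas, hη⟩
  linarith [split so hso_feas.1, split sA hsA_feas.1, etaF_nonneg X a so]

/-- Proposition 5: the variance gap of an optimal solution of Problem (7)
with parameter η ≥ η(s°) is bounded by η. -/
theorem stmt_1 {n p : ℕ} (X : Matrix (Fin n) (Fin p) ℝ) (a k : ℕ)
    (ha1 : 1 ≤ a) (han : a ≤ n) (hak : a ≤ k) (hkp : k ≤ p)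
    (so : Fin p → ℝ) (hso : Opt2 X a k so)
    (η : ℝ) (hη : etaF X a so ≤ η)
    (sA : Fin p → ℝ) (hsA : Opt7 X a k η sA) :
    piF X a so - piF X a sA ≤ η :=
  stmt_1_general X a k han so hso η hη sA hsA
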